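/- arXiv:2605.02456 — 2 statements merged into one kernel-verified Lean document; each statement's English description precedes it below -/
import Mathlib

section
/- Let G be a graph on n vertices and k ∈ [n−1]. For any feasible solution X of the SDP relaxation (SDP_k) for G, the scaled matrix (1/k)·X is feasible for (SDP_1). Consequently, θ_k(G) ≤ k·θ_1(G). -/
/-- The bordered matrix `[[k, diag(X)ᵀ],[diag(X), X]]`. -/
def border {V : Type*} (k : ℝ) (X : Matrix V V ℝ) :
    Matrix (Unit ⊕ V) (Unit ⊕ V) ℝ :=
  Matrix.fromBlocks (Matrix.of fun _ _ => k) (Matrix.of fun _ i => X i i)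
    (Matrix.of fun i _ => X i i) X

/-- Feasibility for the SDP relaxation (SDP_k). -/
def SDPfeasible {V : Type*} [Fintype V] (G : SimpleGraph V) (k : ℝ)
    (X : Matrix V V ℝ) : Prop :=
  X.IsSymm ∧ (∀ i j, G.Adj i j → X i j = 0) ∧ (∀ i j, 0 ≤ X i j) ∧
    (∀ i, X i i ≤ 1) ∧ (border k X).PosSemidef

/-- `θ_k(G)`, the optimal value of (SDP_k). -/
noncomputable def theta {V : Type*} [Fintype V] (G : SimpleGraph V) (k : ℝ) : ℝ :=
  sSup {t : ℝ | ∃ X : Matrix V V ℝ, SDPfeasible G k X ∧ t = X.trace}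

open Matrix

section SDP

variable {V : Type*}

lemma border_smul (c k : ℝ) (X : Matrix V V ℝ) :
    border (c * k) (c • X) = c • border k X := by
  ext (_ | i) (_ | j) <;> simp [border]

lemma posSemidef_border_zero [Fintype V] {k : ℝ} (hk : 0 ≤ k) :
    (border k (0 : Matrix V V ℝ)).PosSemidef := by
  classical
  have hdiag : border k (0 : Matrix V V ℝ) = diagonal (Sum.elim (fun _ => k) 0) := by
    ext (_ | i) (_ | j) <;> simp [border, diagonal_apply]
  rw [hdiag, posSemidef_diagonal_iff]
  rintro (_ | i)
  exacts [hk, le_rfl]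

variable [Fintype V] {G : SimpleGraph V} {k : ℝ} {X : Matrix V V ℝ}

lemma SDPfeasible.zero (hk : 0 ≤ k) : SDPfeasible G k 0 :=
  ⟨isSymm_zero, fun _ _ _ => rfl, fun _ _ => le_rfl, fun _ => zero_le_one,
    posSemidef_border_zero hk⟩

lemma SDPfeasible.smul {c : ℝ} (hc0 : 0 ≤ c) (hc1 : c ≤ 1) (hX : SDPfeasible G k X) :
    SDPfeasible G (c * k) (c • X) := by
  obtain ⟨hsymm, hedge, hnonneg, hdiag, hpsd⟩ := hX
  refine ⟨hsymm.smul c, fun i j hij => by simp [hedge i j hij],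
    fun i j => mul_nonneg hc0 (hnonneg i j), fun i => ?_, ?_⟩
  · exact mul_le_one₀ hc1 (hnonneg i i) (hdiag i)
  · rw [border_smul]
    exact hpsd.smul hc0

lemma SDPfeasible.trace_le_card (hX : SDPfeasible G k X) : X.trace ≤ Fintype.card V := by
  calc X.trace = ∑ i, X i i := rfl
    _ ≤ ∑ _i : V, (1 : ℝ) := Finset.sum_le_sum fun i _ => hX.2.2.2.1 i
    _ = Fintype.card V := by simp

lemma bddAbove_feasible_traces (G : SimpleGraph V) (k : ℝ) :
    BddAbove {t : ℝ | ∃ X : Matrix V V ℝ, SDPfeasible G k X ∧ t = X.trace} :=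
  ⟨Fintype.card V, by rintro t ⟨X, hX, rfl⟩; exact hX.trace_le_card⟩

lemma SDPfeasible.one_div_smul (hk : 1 ≤ k) (hX : SDPfeasible G k X) :
    SDPfeasible G 1 ((1 / k) • X) := by
  have hk0 : 0 < k := zero_lt_one.trans_le hk
  simpa [hk0.ne'] using hX.smul (one_div_nonneg.2 hk0.le) ((div_le_one hk0).2 hk)

lemma theta_le_mul_theta_one (G : SimpleGraph V) (hk : 1 ≤ k) :
    theta G k ≤ k * theta G 1 := by
  have hk0 : 0 < k := zero_lt_one.trans_le hk
  refine csSup_le ⟨0, 0, SDPfeasible.zero hk0.le, trace_zero V ℝ |>.symm⟩ ?_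
  rintro t ⟨X, hX, rfl⟩
  have hscaled : (1 / k) * X.trace ≤ theta G 1 :=
    le_csSup (bddAbove_feasible_traces G 1)
      ⟨_, hX.one_div_smul hk, by rw [trace_smul, smul_eq_mul]⟩
  calc X.trace = k * ((1 / k) * X.trace) := by field_simp
    _ ≤ k * theta G 1 := mul_le_mul_of_nonneg_left hscaled hk0.le

end SDP

theorem stmt_13_general {n : ℕ} (G : SimpleGraph (Fin n)) (k : ℕ)
    (hk1 : 1 ≤ k) :
    (∀ X : Matrix (Fin n) (Fin n) ℝ,
        SDPfeasible G (k : ℝ) X → SDPfeasible G 1 ((1 / (k : ℝ)) • X)) ∧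
      theta G (k : ℝ) ≤ (k : ℝ) * theta G 1 := by
  have hk : (1 : ℝ) ≤ k := by exact_mod_cast hk1
  exact ⟨fun X hX => hX.one_div_smul hk, theta_le_mul_theta_one G hk⟩

theorem stmt_13 {n : ℕ} (G : SimpleGraph (Fin n)) (k : ℕ)
    (hk1 : 1 ≤ k) (hkn : k ≤ n - 1) :
    (∀ X : Matrix (Fin n) (Fin n) ℝ,
        SDPfeasible G (k : ℝ) X → SDPfeasible G 1 ((1 / (k : ℝ)) • X)) ∧
      theta G (k : ℝ) ≤ (k : ℝ) * theta G 1 :=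
  stmt_13_general G k hk1
end

section
/- Let X be feasible for (SDP_k) on a graph G with vertex set V = [n], and let S ⊆ V. If X_S and X_{V∖S} denote the principal submatrices of X indexed by S and V∖S, then tr(X) = tr(X_{V∖S}) + tr(X_S) ≤ θ_k(G − S) + |S|, where G − S is the subgraph induced by V∖S. Consequently θ_k(G) ≤ θ_k(G − S) + |S|. -/
lemma border_submatrix {V W : Type*} (k : ℝ) (X : Matrix V V ℝ) (e : W → V) :
    border k (X.submatrix e e) = (border k X).submatrix (Sum.map id e) (Sum.map id e) := by
  ext i j
  cases i <;> cases j <;> rfl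

lemma feas_submatrix {V : Type*} [Fintype V] [DecidableEq V] {G : SimpleGraph V} {k : ℝ}
    {X : Matrix V V ℝ} (h : SDPfeasible G k X) (T : Set V) [Fintype T] :
    SDPfeasible (G.induce T) k (X.submatrix (Subtype.val : T → V) Subtype.val) := by
  obtain ⟨hs, ha, hn, hd, hp⟩ := h
  refine ⟨?_, ?_, fun i j => hn _ _, fun i => hd _, ?_⟩
  · ext i j
    exact congrFun (congrFun hs _) _
  · intro i j hij
    exact ha _ _ hij
  · rw [border_submatrix]
    exact hp.submatrix _

lemma theta_bddAbove {V : Type*} [Fintype V] (G : SimpleGraph V) (k : ℝ) :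
    BddAbove {t : ℝ | ∃ X : Matrix V V ℝ, SDPfeasible G k X ∧ t = X.trace} := by
  refine ⟨(Fintype.card V : ℝ), fun t ht => ?_⟩
  obtain ⟨Y, hY, rfl⟩ := ht
  calc Y.trace = ∑ i, Y i i := rfl
    _ ≤ ∑ _i : V, (1 : ℝ) := Finset.sum_le_sum fun i _ => hY.2.2.2.1 i
    _ = (Fintype.card V : ℝ) := by simp

lemma trace_le_theta {V : Type*} [Fintype V] {G : SimpleGraph V} {k : ℝ}
    {X : Matrix V V ℝ} (h : SDPfeasible G k X) : X.trace ≤ theta G k :=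
  le_csSup (theta_bddAbove G k) ⟨X, h, rfl⟩

theorem stmt_15 {n : ℕ} (G : SimpleGraph (Fin n)) (k : ℝ) (S : Finset (Fin n))
    (X : Matrix (Fin n) (Fin n) ℝ) (hX : SDPfeasible G k X) :
    (X.trace = (X.submatrix (Subtype.val : (↑(Sᶜ) : Set (Fin n)) → Fin n)
          (Subtype.val : (↑(Sᶜ) : Set (Fin n)) → Fin n)).trace +
        (X.submatrix (Subtype.val : (↑S : Set (Fin n)) → Fin n)
          (Subtype.val : (↑S : Set (Fin n)) → Fin n)).trace) ∧
      X.trace ≤ theta (G.induce (↑(Sᶜ) : Set (Fin n))) k + (S.card : ℝ) ∧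
      theta G k ≤ theta (G.induce (↑(Sᶜ) : Set (Fin n))) k + (S.card : ℝ) := by
  have key : ∀ Y : Matrix (Fin n) (Fin n) ℝ, SDPfeasible G k Y →
      (Y.trace = (Y.submatrix (Subtype.val : (↑(Sᶜ) : Set (Fin n)) → Fin n)
          (Subtype.val : (↑(Sᶜ) : Set (Fin n)) → Fin n)).trace +
        (Y.submatrix (Subtype.val : (↑S : Set (Fin n)) → Fin n)
          (Subtype.val : (↑S : Set (Fin n)) → Fin n)).trace) ∧
      Y.trace ≤ theta (G.induce (↑(Sᶜ) : Set (Fin n))) k + (S.card : ℝ) := by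
    intro Y hY
    have hsplit : Y.trace = (Y.submatrix (Subtype.val : (↑(Sᶜ) : Set (Fin n)) → Fin n)
          Subtype.val).trace +
        (Y.submatrix (Subtype.val : (↑S : Set (Fin n)) → Fin n) Subtype.val).trace := by
      have h1 : (Y.submatrix (Subtype.val : (↑(Sᶜ) : Set (Fin n)) → Fin n)
          Subtype.val).trace = ∑ i ∈ Sᶜ, Y i i := by
        rw [Matrix.trace]
        exact Finset.sum_finset_coe (fun i => Y i i) Sᶜ
      have h2 : (Y.submatrix (Subtype.val : (↑S : Set (Fin n)) → Fin n)
          Subtype.val).trace = ∑ i ∈ S, Y i i := by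
        rw [Matrix.trace]
        exact Finset.sum_finset_coe (fun i => Y i i) S
      rw [h1, h2, Matrix.trace, add_comm]
      exact (Finset.sum_add_sum_compl S _).symm
    have hfeas := feas_submatrix hY (↑(Sᶜ) : Set (Fin n))
    have hle1 := trace_le_theta hfeas
    have hle2 : (Y.submatrix (Subtype.val : (↑S : Set (Fin n)) → Fin n)
        Subtype.val).trace ≤ (S.card : ℝ) := by
      calc _ = ∑ i : (↑S : Set (Fin n)), Y i i := rfl
        _ ≤ ∑ _i : (↑S : Set (Fin n)), (1 : ℝ) :=
          Finset.sum_le_sum fun i _ => hY.2.2.2.1 i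
        _ = (S.card : ℝ) := by simp
    exact ⟨hsplit, hsplit ▸ add_le_add hle1 hle2⟩
  obtain ⟨h1, h2⟩ := key X hX
  refine ⟨h1, h2, ?_⟩
  have hRHS : (0 : ℝ) ≤ theta (G.induce (↑(Sᶜ) : Set (Fin n))) k + (S.card : ℝ) := by
    have h0 : (0 : ℝ) ≤ (X.submatrix (Subtype.val : (↑(Sᶜ) : Set (Fin n)) → Fin n)
        Subtype.val).trace :=
      Finset.sum_nonneg fun i _ => hX.2.2.1 _ _
    have := trace_le_theta (feas_submatrix hX (↑(Sᶜ) : Set (Fin n)))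
    have hc : (0:ℝ) ≤ (S.card : ℝ) := Nat.cast_nonneg _
    linarith
  refine Real.sSup_le ?_ hRHS
  rintro t ⟨Y, hY, rfl⟩
  exact (key Y hY).2
end
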